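/- arXiv:2501.01418 — 2 statements merged into one kernel-verified Lean document; each statement's English description precedes it below -/
import Mathlib

section
/- Let ℓ ≥ 1 and let e_1,…,e_ℓ be the standard orthonormal basis of ℂ^ℓ. Let ω = e^{2πi/3} and define the finite set 𝒩 = {e_j : j ∈ [ℓ]} ∪ {e_j + ω^a e_k : j,k ∈ [ℓ], j ≠ k, a ∈ {0,1,2}}. Then for every matrix B ∈ ℂ^{ℓ×ℓ}, the operator norm satisfies ‖B‖ ≤ ℓ · max_{v ∈ 𝒩} |v* B v|. -/
open MeasureTheory Matrix Filter
open scoped Pointwise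

noncomputable section

/-- Operator (spectral) norm of a square complex matrix. -/
def opNorm {m : ℕ} (M : Matrix (Fin m) (Fin m) ℂ) : ℝ :=
  ‖Matrix.toEuclideanCLM (𝕜 := ℂ) M‖

/-- The quadratic form `x* M x`. -/
def qform {m : ℕ} (M : Matrix (Fin m) (Fin m) ℂ) (x : Fin m → ℂ) : ℂ :=
  dotProduct (star x) (M.mulVec x)

/-- The primitive cube root of unity `ω = e^{2πi/3}`. -/
def omega3 : ℂ := Complex.exp (2 * Real.pi * Complex.I / 3)

/-- The net `𝒩 = {e_j} ∪ {e_j + ω^a e_k : j ≠ k, a ∈ {0,1,2}}`. -/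
def netN (ℓ : ℕ) : Set (Fin ℓ → ℂ) :=
  {v | (∃ j : Fin ℓ, v = Pi.single j 1) ∨
    (∃ j k : Fin ℓ, j ≠ k ∧ ∃ a : Fin 3,
      v = Pi.single j 1 + Pi.single k (omega3 ^ (a : ℕ)))}

end

/-!
Polarization with cube roots of unity recovers each entry of `B` from the net:
`3 B j k = ∑ₐ ω^(-a) (e_j + ωᵃ e_k)* B (e_j + ωᵃ e_k)`, so every entry has modulus at most the
maximum `M` of `|v* B v|` over `𝒩`. The spectral norm is at most the Frobenius norm, which is at
most `ℓ M`.
-/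

namespace Matrix

section Frobenius

attribute [local instance] Matrix.frobeniusNormedAddCommGroup

theorem frobenius_norm_le_of_forall_norm_le {α m n : Type*} [NormedAddCommGroup α] [Fintype m]
    [Fintype n] {A : Matrix m n α} {c : ℝ} (hc : 0 ≤ c) (h : ∀ i j, ‖A i j‖ ≤ c) :
    ‖A‖ ≤ √(Fintype.card m * Fintype.card n) * c := by
  rw [frobenius_norm_def, ← Real.sqrt_eq_rpow, ← Real.sqrt_sq hc, ← Real.sqrt_mul (by positivity)]
  refine Real.sqrt_le_sqrt ?_
  calc ∑ i, ∑ j, ‖A i j‖ ^ (2 : ℝ) ≤ ∑ _i : m, ∑ _j : n, c ^ 2 := by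
        gcongr with i _ j _
        rw [Real.rpow_two]
        exact pow_le_pow_left₀ (norm_nonneg _) (h i j) 2
    _ = _ := by simp only [Finset.sum_const, Finset.card_univ, nsmul_eq_mul]; ring

variable {𝕜 n : Type*} [RCLike 𝕜] [Fintype n] [DecidableEq n]

theorem norm_toEuclideanCLM_le_frobenius_norm (A : Matrix n n 𝕜) :
    ‖toEuclideanCLM (𝕜 := 𝕜) A‖ ≤ ‖A‖ := by
  refine ContinuousLinearMap.opNorm_le_bound _ (norm_nonneg A) fun x => ?_
  calc ‖toEuclideanCLM (𝕜 := 𝕜) A x‖ = ‖replicateCol Unit (A *ᵥ x.ofLp)‖ := by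
        rw [frobenius_norm_replicateCol]; rfl
    _ = ‖A * replicateCol Unit x.ofLp‖ := by rw [replicateCol_mulVec]
    _ ≤ ‖A‖ * ‖replicateCol Unit x.ofLp‖ := frobenius_norm_mul _ _
    _ = ‖A‖ * ‖x‖ := by rw [frobenius_norm_replicateCol]

theorem norm_toEuclideanCLM_le_of_forall_norm_le {A : Matrix n n 𝕜} {c : ℝ} (hc : 0 ≤ c)
    (h : ∀ i j, ‖A i j‖ ≤ c) : ‖toEuclideanCLM (𝕜 := 𝕜) A‖ ≤ Fintype.card n * c := by
  calc ‖toEuclideanCLM (𝕜 := 𝕜) A‖ ≤ ‖A‖ := norm_toEuclideanCLM_le_frobenius_norm A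
    _ ≤ √(Fintype.card n * Fintype.card n) * c := frobenius_norm_le_of_forall_norm_le hc h
    _ = Fintype.card n * c := by rw [Real.sqrt_mul_self (Nat.cast_nonneg _)]

end Frobenius

end Matrix

theorem Set.Finite.le_ciSup₂ {α β : Type*} [ConditionallyCompleteLattice α] {s : Set β}
    (hs : s.Finite) (f : β → α) {b : β} (hb : b ∈ s) : f b ≤ ⨆ x ∈ s, f x :=
  _root_.le_ciSup₂ (f := fun x (_ : x ∈ s) => f x)
    ((hs.image f).bddAbove.mono (Set.iUnion_subset fun _ => Set.range_subset_iff.2 fun hx =>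
      Set.mem_image_of_mem f hx)) b hb
theorem isPrimitiveRoot_omega3 : IsPrimitiveRoot omega3 3 := by
  simpa [omega3] using Complex.isPrimitiveRoot_exp 3 (by norm_num)

theorem omega3_pow_three : omega3 ^ 3 = 1 := isPrimitiveRoot_omega3.pow_eq_one

theorem one_add_omega3_add_omega3_sq : 1 + omega3 + omega3 ^ 2 = 0 := by
  simpa [Finset.sum_range_succ, add_assoc] using
    isPrimitiveRoot_omega3.geom_sum_eq_zero (by norm_num)

theorem norm_omega3 : ‖omega3‖ = 1 :=
  isPrimitiveRoot_omega3.norm'_eq_one (by norm_num)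

theorem conj_omega3 : starRingEnd ℂ omega3 = omega3 ^ 2 := by
  have h : omega3 * starRingEnd ℂ omega3 = omega3 * omega3 ^ 2 := by
    rw [Complex.mul_conj, Complex.normSq_eq_norm_sq, norm_omega3, ← pow_succ', omega3_pow_three]
    norm_num
  exact mul_left_cancel₀ (isPrimitiveRoot_omega3.ne_zero (by norm_num)) h

section qform

variable {m : ℕ} (B : Matrix (Fin m) (Fin m) ℂ)

theorem qform_single (j : Fin m) : qform B (Pi.single j 1) = B j j := by
  simp [qform, mulVec_single, single_dotProduct]

theorem qform_single_add_single (j k : Fin m) (c : ℂ) :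
    qform B (Pi.single j 1 + Pi.single k c) =
      B j j + c * B j k + starRingEnd ℂ c * B k j + starRingEnd ℂ c * c * B k k := by
  simp only [qform, star_add, Pi.star_single, star_one, RCLike.star_def, mulVec_add, mulVec_single,
    MulOpposite.op_one, one_smul, op_smul_eq_smul, dotProduct_add, add_dotProduct, single_dotProduct,
    col_apply, one_mul, dotProduct_smul, smul_eq_mul]
  ring

theorem three_mul_apply_eq_sum_qform (j k : Fin m) :
    3 * B j k = ∑ a : Fin 3,
      omega3 ^ (2 * (a : ℕ)) * qform B (Pi.single j 1 + Pi.single k (omega3 ^ (a : ℕ))) := by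
  simp only [Fin.sum_univ_three, Fin.val_zero, Fin.val_one, Fin.val_two, qform_single_add_single,
    map_pow, conj_omega3]
  -- modulo `ω ^ 3 = 1`, the two sides differ by `(B j j + B k j + B k k) * (1 + ω + ω ^ 2)`
  linear_combination (-(B j j + B k j + B k k)) * one_add_omega3_add_omega3_sq
    - (B j j * omega3 + B j k * (omega3 ^ 3 + 2) + B k j * (omega3 + omega3 ^ 2 * (omega3 ^ 3 + 1))
      + B k k * (omega3 ^ 2 + omega3 * (omega3 ^ 6 + omega3 ^ 3 + 1))) * omega3_pow_three

end qform

theorem finite_netN (ℓ : ℕ) : (netN ℓ).Finite := by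
  refine ((Set.finite_range fun j : Fin ℓ => (Pi.single j 1 : Fin ℓ → ℂ)).union
    (Set.finite_range fun x : Fin ℓ × Fin ℓ × Fin 3 =>
      (Pi.single x.1 1 + Pi.single x.2.1 (omega3 ^ (x.2.2 : ℕ)) : Fin ℓ → ℂ))).subset ?_
  rintro v (⟨j, rfl⟩ | ⟨j, k, -, a, rfl⟩)
  exacts [Or.inl ⟨j, rfl⟩, Or.inr ⟨(j, k, a), rfl⟩]

theorem norm_apply_le_of_forall_netN_norm_qform_le {ℓ : ℕ} {B : Matrix (Fin ℓ) (Fin ℓ) ℂ} {M : ℝ}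
    (hM : ∀ v ∈ netN ℓ, ‖qform B v‖ ≤ M) (j k : Fin ℓ) : ‖B j k‖ ≤ M := by
  obtain rfl | hjk := eq_or_ne j k
  · simpa [qform_single] using hM _ (Or.inl ⟨j, rfl⟩)
  have h3 : 3 * ‖B j k‖ ≤ 3 * M := calc
    3 * ‖B j k‖ = ‖3 * B j k‖ := by rw [norm_mul]; norm_num
    _ ≤ ∑ a : Fin 3,
        ‖omega3 ^ (2 * (a : ℕ)) * qform B (Pi.single j 1 + Pi.single k (omega3 ^ (a : ℕ)))‖ := by
      rw [three_mul_apply_eq_sum_qform]; exact norm_sum_le _ _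
    _ ≤ ∑ _a : Fin 3, M := by
      gcongr with a
      rw [norm_mul, norm_pow, norm_omega3, one_pow, one_mul]
      exact hM _ (Or.inr ⟨j, k, hjk, a, rfl⟩)
    _ = 3 * M := by simp
  linarith

theorem stmt0_general (ℓ : ℕ) (B : Matrix (Fin ℓ) (Fin ℓ) ℂ) :
    opNorm B ≤ (ℓ : ℝ) * ⨆ v ∈ netN ℓ, ‖qform B v‖ := by
  have hM : 0 ≤ ⨆ v ∈ netN ℓ, ‖qform B v‖ :=
    Real.iSup_nonneg fun _ => Real.iSup_nonneg fun _ => norm_nonneg _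
  have hentry := norm_apply_le_of_forall_netN_norm_qform_le fun v hv =>
    (finite_netN ℓ).le_ciSup₂ (fun v => ‖qform B v‖) hv
  simpa [opNorm] using Matrix.norm_toEuclideanCLM_le_of_forall_norm_le hM hentry

/-- net construction: for every `B ∈ ℂ^{ℓ×ℓ}`,
`‖B‖ ≤ ℓ · max_{v ∈ 𝒩} |v* B v|`. -/
theorem stmt0 (ℓ : ℕ) (hℓ : 1 ≤ ℓ) (B : Matrix (Fin ℓ) (Fin ℓ) ℂ) :
    opNorm B ≤ (ℓ : ℝ) * ⨆ v ∈ netN ℓ, ‖qform B v‖ :=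
  stmt0_general ℓ B
end

section
/- Let f : ℝ³ → ℝ be f(x,y,z) = x² + y² − z². Suppose (x,y) and (x',y') in ℝ² satisfy x² + y² = x'² + y'² and x·x' + y·y' ≥ 0 (i.e., they are the base vertices of a non-obtuse isosceles triangle with apex at the origin), and let d = √((x−x')² + (y−y')²) be the length of its base. Then for any z, z' ∈ ℝ there exists a point u on the line segment in ℝ³ connecting (x,y,z) and (x',y',z') with |f(u)| ≥ d²/8. -/
open MeasureTheory Matrix Filter
open scoped Pointwise

set_option maxHeartbeats 1000000 in
/-- curvature of the cone `f(x,y,z) = x²+y²−z²`: if `(x,y)` and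
`(x',y')` are base vertices of a non-obtuse isosceles triangle with apex at the origin
and base length `d`, then for any `z, z'` some point `u` on the segment from `(x,y,z)`
to `(x',y',z')` has `|f(u)| ≥ d²/8`. -/
theorem stmt8 (x y x' y' z z' : ℝ)
    (hiso : x ^ 2 + y ^ 2 = x' ^ 2 + y' ^ 2)
    (hnonobtuse : 0 ≤ x * x' + y * y') :
    ∃ s ∈ Set.Icc (0 : ℝ) 1,
      |((1 - s) * x + s * x') ^ 2 + ((1 - s) * y + s * y') ^ 2 -
          ((1 - s) * z + s * z') ^ 2| ≥
        ((x - x') ^ 2 + (y - y') ^ 2) / 8 := by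
  by_contra hcon
  push_neg at hcon
  have hd2nn : (0:ℝ) ≤ (x - x') ^ 2 + (y - y') ^ 2 := by positivity
  have hR : (x - x') ^ 2 + (y - y') ^ 2 ≤ 2 * (x ^ 2 + y ^ 2) := by
    linarith [hnonobtuse, hiso, sq_nonneg (x - x'), sq_nonneg (y - y')]
  have hkey : ∀ s : ℝ, ((1 - s) * x + s * x') ^ 2 + ((1 - s) * y + s * y') ^ 2
      = (x ^ 2 + y ^ 2) - s * (1 - s) * ((x - x') ^ 2 + (y - y') ^ 2) := by
    intro s
    linear_combination (-s) * hiso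
  rcases le_or_gt (z * z') 0 with hzz | hzz
  · -- pick s0 where the linear part vanishes
    rcases eq_or_ne z z' with hz | hz
    · -- then z = z' = 0
      have hz2 : z ^ 2 ≤ 0 := by rw [hz] at hzz ⊢; linarith [hzz]
      have h0 := hcon 0 ⟨le_refl _, by norm_num⟩
      rw [abs_lt] at h0
      linarith [h0.2, hR, hz2, sq_nonneg x, sq_nonneg y]
    · have hu : z - z' ≠ 0 := sub_ne_zero.mpr hz
      obtain ⟨s0, hs0⟩ : ∃ t : ℝ, t = z / (z - z') := ⟨_, rfl⟩
      have hzu : (0:ℝ) ≤ z * (z - z') := by linarith [sq_nonneg z, hzz]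
      have hzu' : (0:ℝ) ≤ (-z') * (z - z') := by linarith [sq_nonneg z', hzz]
      have h1 : 0 ≤ s0 := by
        have h : s0 = (z * (z - z')) / ((z - z') ^ 2) := by
          rw [hs0]; field_simp
        rw [h]; exact div_nonneg hzu (sq_nonneg _)
      have h2 : s0 ≤ 1 := by
        have h : 1 - s0 = ((-z') * (z - z')) / ((z - z') ^ 2) := by
          rw [hs0]; field_simp; ring
        linarith [div_nonneg hzu' (sq_nonneg (z - z')), h]
      have hl : (1 - s0) * z + s0 * z' = 0 := by
        rw [hs0]; field_simp; ring
      have h3 := hcon s0 ⟨h1, h2⟩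
      rw [abs_lt] at h3
      have hk := hkey s0
      have hq' : s0 * (1 - s0) ≤ 1 / 4 := by nlinarith [sq_nonneg (2 * s0 - 1)]
      have hq : s0 * (1 - s0) * ((x - x') ^ 2 + (y - y') ^ 2)
          ≤ ((x - x') ^ 2 + (y - y') ^ 2) / 4 := by
        linarith [mul_le_mul_of_nonneg_right hq' hd2nn]
      have h4 := h3.2
      rw [hk, hl] at h4
      norm_num at h4
      linarith [h4, hq, hR]
  · -- same sign case: probe at 0, 1, 1/2
    have h0 := hcon 0 ⟨le_refl _, by norm_num⟩
    have h1 := hcon 1 ⟨by norm_num, le_refl _⟩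
    have hh := hcon (1/2) ⟨by norm_num, by norm_num⟩
    rw [abs_lt] at h0 h1 hh
    have e0 : (x ^ 2 + y ^ 2) - z ^ 2 < ((x - x') ^ 2 + (y - y') ^ 2) / 8 := by
      linarith [h0.2]
    have e1 : (x ^ 2 + y ^ 2) - z' ^ 2 < ((x - x') ^ 2 + (y - y') ^ 2) / 8 := by
      linarith [h1.2]
    have hm : (z + z') ^ 2 < 4 * (x ^ 2 + y ^ 2) - ((x - x') ^ 2 + (y - y') ^ 2) / 2 := by
      linarith [hh.1, hkey (1/2)]
    rcases le_total (z ^ 2) (z' ^ 2) with hc | hc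
    · have hp : z ^ 2 ≤ z * z' := by
        have ha : (0:ℝ) < z * z' + z ^ 2 := by positivity
        have hb : (0:ℝ) ≤ (z * z' - z ^ 2) * (z * z' + z ^ 2) := by
          linarith [mul_nonneg (sub_nonneg.mpr hc) (sq_nonneg z)]
        nlinarith [ha, hb]
      linarith [e0, hm, hp, hc, hR]
    · have hp : z' ^ 2 ≤ z * z' := by
        have ha : (0:ℝ) < z * z' + z' ^ 2 := by positivity
        have hb : (0:ℝ) ≤ (z * z' - z' ^ 2) * (z * z' + z' ^ 2) := by
          linarith [mul_nonneg (sub_nonneg.mpr hc) (sq_nonneg z')]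
        nlinarith [ha, hb]
      linarith [e1, hm, hp, hc, hR]
end
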